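/- For every element w of the 3-strand braid group, the trace of B_{-t}(w) is a definite Laurent polynomial (all coefficients share the same sign). -/

import Mathlib

open LaurentPolynomial

/-- Letters generating the 3-strand braid group: σ₁, σ₂ and their formal inverses. -/
inductive BLetter
  | s1 | s2 | s1inv | s2inv
deriving DecidableEq

/-- The reduced Burau representation `B_{-t}` (i.e. with `-t` substituted for the
variable) over the Laurent polynomials `ℤ[t,t⁻¹]`, on each letter. -/
noncomputable def burauNegLetter : BLetter → Matrix (Fin 2) (Fin 2) (LaurentPolynomial ℤ)
  | .s1 => !![T 1, 1; 0, 1]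
  | .s2 => !![1, 0; -T 1, T 1]
  | .s1inv => !![T (-1), -T (-1); 0, 1]
  | .s2inv => !![1, 0; 1, T (-1)]

/-- The matrix `B_{-t}(w)` of a word in the generators and their inverses. -/
noncomputable def burauNegWord (w : List BLetter) : Matrix (Fin 2) (Fin 2) (LaurentPolynomial ℤ) :=
  (w.map burauNegLetter).prod

/-- A Laurent polynomial is *definite* when all of its coefficients have the same
sign (all `≥ 0` or all `≤ 0`). -/
def LaurentDefinite (p : LaurentPolynomial ℤ) : Prop :=
  (∀ n : ℤ, 0 ≤ p.coeff n) ∨ (∀ n : ℤ, p.coeff n ≤ 0)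

namespace BurauAux

abbrev L := LaurentPolynomial ℤ
abbrev M2 := Matrix (Fin 2) (Fin 2) (LaurentPolynomial ℤ)

/-! ### Laurent polynomial coefficient positivity -/

def NN (p : L) : Prop := ∀ n : ℤ, 0 ≤ p.coeff n

lemma NN_zero : NN 0 := fun n => by simp

lemma NN_one : NN 1 := fun n => by
  rw [AddMonoidAlgebra.one_def, AddMonoidAlgebra.coeff_single, Finsupp.single_apply]
  split <;> norm_num

lemma NN_T (m : ℤ) : NN (T m) := fun n => by
  show (0:ℤ) ≤ (Finsupp.single m 1 : ℤ →₀ ℤ) n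
  rw [Finsupp.single_apply]; split <;> norm_num

lemma NN_add {p q : L} (hp : NN p) (hq : NN q) : NN (p + q) := fun n => by
  rw [AddMonoidAlgebra.coeff_add, Finsupp.add_apply]
  exact add_nonneg (hp n) (hq n)

lemma NN_mul {p q : L} (hp : NN p) (hq : NN q) : NN (p * q) := fun n => by
  rw [AddMonoidAlgebra.mul_apply]
  refine Finset.sum_nonneg fun a _ => Finset.sum_nonneg fun b _ => ?_
  dsimp only
  split
  · exact mul_nonneg (hp a) (hq b)
  · exact le_refl 0

lemma NN_sum {ι : Type*} (s : Finset ι) (f : ι → L) (h : ∀ i ∈ s, NN (f i)) :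
    NN (∑ i ∈ s, f i) := fun n => by
  rw [AddMonoidAlgebra.coeff_sum, Finsupp.finset_sum_apply]
  exact Finset.sum_nonneg fun i hi => h i hi n

lemma def_of_NN {p : L} (h : NN p) : LaurentDefinite p := Or.inl h

lemma def_of_NN_neg {p : L} (h : NN (-p)) : LaurentDefinite p := by
  right; intro n
  have := h n
  rw [AddMonoidAlgebra.coeff_neg, Finsupp.neg_apply] at this
  linarith

lemma def_neg {p : L} (h : LaurentDefinite p) : LaurentDefinite (-p) := by
  rcases h with h | h
  · right; intro n; rw [AddMonoidAlgebra.coeff_neg, Finsupp.neg_apply]; linarith [h n]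
  · left; intro n; rw [AddMonoidAlgebra.coeff_neg, Finsupp.neg_apply]; linarith [h n]

lemma NN_of_np {p : L} (h : ∀ n : ℤ, p.coeff n ≤ 0) : NN (-p) := fun n => by
  rw [AddMonoidAlgebra.coeff_neg, Finsupp.neg_apply]; linarith [h n]

lemma def_T_mul {p : L} (m : ℤ) (h : LaurentDefinite p) : LaurentDefinite (T m * p) := by
  rcases h with h | h
  · exact def_of_NN (NN_mul (NN_T m) h)
  · refine def_of_NN_neg ?_
    rw [← mul_neg]
    exact NN_mul (NN_T m) (NN_of_np h)

lemma def_negT_mul {p : L} (m : ℤ) (h : LaurentDefinite p) : LaurentDefinite (-T m * p) := by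
  rw [neg_mul]
  exact def_neg (def_T_mul m h)

/-! ### T-product arithmetic -/

lemma Tmul (a b c : ℤ) (h : a + b = c) : (T a : L) * T b = T c := by rw [← T_add, h]

lemma T1T1 : (T 1 : L) * T 1 = T 2 := Tmul 1 1 2 (by norm_num)
lemma T1T2 : (T 1 : L) * T 2 = T 3 := Tmul 1 2 3 (by norm_num)
lemma T2T1 : (T 2 : L) * T 1 = T 3 := Tmul 2 1 3 (by norm_num)
lemma T2T2 : (T 2 : L) * T 2 = T 4 := Tmul 2 2 4 (by norm_num)
lemma T1T3 : (T 1 : L) * T 3 = T 4 := Tmul 1 3 4 (by norm_num)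
lemma T3T1 : (T 3 : L) * T 1 = T 4 := Tmul 3 1 4 (by norm_num)
lemma Tm3T2 : (T (-3) : L) * T 2 = T (-1) := Tmul (-3) 2 (-1) (by norm_num)
lemma Tm3T3 : (T (-3) : L) * T 3 = 1 := by rw [Tmul (-3) 3 0 (by norm_num), T_zero]
lemma Tm3T4 : (T (-3) : L) * T 4 = T 1 := Tmul (-3) 4 1 (by norm_num)

/-! ### The matrices -/

noncomputable def s : M2 := !![0, T 1; -T 2, 0]
noncomputable def u : M2 := !![0, T 1; -T 1, T 1]
noncomputable def D : M2 := !![1, 0; 0, -1]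
noncomputable def P : M2 := !![T 2, T 2; 0, T 3]
noncomputable def Q : M2 := !![T 3, 0; T 4, T 4]

lemma smul_fin2 (c a b d e : L) :
    c • !![a, b; d, e] = !![c*a, c*b; c*d, c*e] := by
  ext i j; fin_cases i <;> fin_cases j <;> simp

lemma one_fin2 : (1 : M2) = !![1,0;0,1] := by
  ext i j; fin_cases i <;> fin_cases j <;> simp [Matrix.one_apply]

lemma ss : s * s = (-T 3 : L) • (1 : M2) := by
  rw [s, one_fin2, smul_fin2, Matrix.mul_fin_two]
  simp only [neg_mul, mul_neg, mul_one, one_mul, zero_mul, mul_zero, add_zero, zero_add,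
    neg_neg, neg_zero, T1T2, T2T1, T1T1]

lemma uuu : u * (u * u) = (-T 3 : L) • (1 : M2) := by
  rw [u, one_fin2, smul_fin2, Matrix.mul_fin_two, Matrix.mul_fin_two]
  simp only [neg_mul, mul_neg, mul_one, one_mul, zero_mul, mul_zero, add_zero, zero_add,
    neg_neg, neg_zero, T1T2, T2T1, T1T1, mul_add, add_mul, T2T2, T1T3, T3T1]
  norm_num

lemma DD : D * D = 1 := by
  rw [D, one_fin2, Matrix.mul_fin_two]
  norm_num

lemma Dsu : D * (s * u) * D = -P := by
  rw [D, s, u, P, Matrix.mul_fin_two, Matrix.mul_fin_two, Matrix.mul_fin_two]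
  simp only [neg_mul, mul_neg, mul_one, one_mul, zero_mul, mul_zero, add_zero, zero_add,
    neg_neg, neg_zero, T1T2, T2T1, T1T1]
  ext i j; fin_cases i <;> fin_cases j <;> simp

lemma Dsuu : D * (s * (u * u)) * D = -Q := by
  rw [D, s, u, Q, Matrix.mul_fin_two, Matrix.mul_fin_two, Matrix.mul_fin_two,
    Matrix.mul_fin_two]
  simp only [neg_mul, mul_neg, mul_one, one_mul, zero_mul, mul_zero, add_zero, zero_add,
    neg_neg, neg_zero, T1T2, T2T1, T1T1, mul_add, add_mul, T2T2, T1T3, T3T1]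
  ext i j; fin_cases i <;> fin_cases j <;> simp

/-! ### Words over the alphabet {s, u} -/

noncomputable def gm : Bool → M2
  | false => s
  | true => u

noncomputable def gprod (l : List Bool) : M2 := (l.map gm).prod

lemma gprod_nil : gprod [] = 1 := rfl

lemma gprod_cons (x : Bool) (l : List Bool) : gprod (x :: l) = gm x * gprod l := by
  simp [gprod]

lemma gprod_append (a b : List Bool) : gprod (a ++ b) = gprod a * gprod b := by
  simp [gprod]

lemma rot (a b : List Bool) :
    Matrix.trace (gprod (a ++ b)) = Matrix.trace (gprod (b ++ a)) := by
  rw [gprod_append, gprod_append, Matrix.trace_mul_comm]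

lemma red_ff (l : List Bool) : gprod (false :: false :: l) = (-T 3 : L) • gprod l := by
  rw [gprod_cons, gprod_cons, ← mul_assoc]
  show s * s * gprod l = _
  rw [ss, smul_mul_assoc, one_mul]

lemma red_ttt (l : List Bool) :
    gprod (true :: true :: true :: l) = (-T 3 : L) • gprod l := by
  rw [gprod_cons, gprod_cons, gprod_cons, ← mul_assoc, ← mul_assoc]
  show u * u * u * gprod l = _
  rw [mul_assoc u u u, uuu, smul_mul_assoc, one_mul]

lemma tred_ff (x y : List Bool) :
    Matrix.trace (gprod (x ++ ([false, false] ++ y))) =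
      (-T 3 : L) * Matrix.trace (gprod (y ++ x)) := by
  rw [rot]
  have : ([false, false] ++ y) ++ x = false :: false :: (y ++ x) := by simp
  rw [this, red_ff, Matrix.trace_smul, smul_eq_mul]

lemma tred_ttt (x y : List Bool) :
    Matrix.trace (gprod (x ++ ([true, true, true] ++ y))) =
      (-T 3 : L) * Matrix.trace (gprod (y ++ x)) := by
  rw [rot]
  have : ([true, true, true] ++ y) ++ x = true :: true :: true :: (y ++ x) := by simp
  rw [this, red_ttt, Matrix.trace_smul, smul_eq_mul]

/-! ### Matrices with nonnegative coefficients -/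

def MNN (A : M2) : Prop := ∀ i j, NN (A i j)

lemma MNN_one : MNN 1 := by
  intro i j
  rw [Matrix.one_apply]
  split
  · exact NN_one
  · exact NN_zero

lemma MNN_mul {A B : M2} (hA : MNN A) (hB : MNN B) : MNN (A * B) := by
  intro i j
  rw [Matrix.mul_apply]
  exact NN_sum _ _ fun k _ => NN_mul (hA i k) (hB k j)

lemma MNN_P : MNN P := by
  intro i j
  fin_cases i <;> fin_cases j <;> simp [P] <;> first | exact NN_T _ | exact NN_zero

lemma MNN_Q : MNN Q := by
  intro i j
  fin_cases i <;> fin_cases j <;> simp [Q] <;> first | exact NN_T _ | exact NN_zero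

lemma NN_trace {A : M2} (hA : MNN A) : NN (Matrix.trace A) := by
  rw [Matrix.trace_fin_two]
  exact NN_add (hA 0 0) (hA 1 1)

/-! ### Block-form words -/

inductive Blocks : List Bool → Prop
  | nil : Blocks []
  | one {w : List Bool} : Blocks w → Blocks (false :: true :: w)
  | two {w : List Bool} : Blocks w → Blocks (false :: true :: true :: w)

lemma conj_mul (A B : M2) : D * (A * B) * D = (D * A * D) * (D * B * D) := by
  have : (D * A * D) * (D * B * D) = D * A * (D * D) * B * D := by
    simp only [Matrix.mul_assoc]
  rw [this, DD, Matrix.mul_one]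
  simp only [Matrix.mul_assoc]

lemma blocks_MNN {w : List Bool} (h : Blocks w) :
    MNN (D * gprod w * D) ∨ MNN (-(D * gprod w * D)) := by
  induction h with
  | nil =>
    left
    rw [gprod_nil, Matrix.mul_one, DD]
    exact MNN_one
  | @one w h ih =>
    have e : gprod (false :: true :: w) = (s * u) * gprod w := by
      simp only [gprod_cons]
      show s * (u * gprod w) = _
      rw [mul_assoc]
    rw [e, conj_mul, Dsu]
    rcases ih with ih | ih
    · right
      rw [neg_mul, neg_neg]
      exact MNN_mul MNN_P ih
    · left
      rw [neg_mul, ← mul_neg]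
      exact MNN_mul MNN_P ih
  | @two w h ih =>
    have e : gprod (false :: true :: true :: w) = (s * (u * u)) * gprod w := by
      simp only [gprod_cons]
      show s * (u * (u * gprod w)) = _
      simp only [mul_assoc]
    rw [e, conj_mul, Dsuu]
    rcases ih with ih | ih
    · right
      rw [neg_mul, neg_neg]
      exact MNN_mul MNN_Q ih
    · left
      rw [neg_mul, ← mul_neg]
      exact MNN_mul MNN_Q ih

lemma trace_conj (A : M2) : Matrix.trace (D * A * D) = Matrix.trace A := by
  rw [Matrix.trace_mul_comm, ← Matrix.mul_assoc, DD, Matrix.one_mul]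

lemma def_blocks {w : List Bool} (h : Blocks w) :
    LaurentDefinite (Matrix.trace (gprod w)) := by
  rcases blocks_MNN h with h' | h'
  · have := NN_trace h'
    rw [trace_conj] at this
    exact def_of_NN this
  · have := NN_trace h'
    rw [Matrix.trace_neg, trace_conj] at this
    exact def_of_NN_neg this

/-! ### Decomposition of words starting with `false` -/

lemma decomp : ∀ (n : ℕ) (r : List Bool), r.length ≤ n →
    Blocks (false :: r) ∨
    (∃ x y, false :: r = x ++ ([false, false] ++ y)) ∨
    (∃ x y, false :: r = x ++ ([true, true, true] ++ y)) ∨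
    (∃ x, false :: r = x ++ [false]) := by
  intro n
  induction n with
  | zero =>
    intro r hr
    have : r = [] := List.length_eq_zero_iff.mp (Nat.le_zero.mp hr)
    subst this
    exact Or.inr (Or.inr (Or.inr ⟨[], rfl⟩))
  | succ n ih =>
    intro r hr
    match r with
    | [] => exact Or.inr (Or.inr (Or.inr ⟨[], rfl⟩))
    | false :: r' => exact Or.inr (Or.inl ⟨[], r', rfl⟩)
    | [true] => exact Or.inl (Blocks.one Blocks.nil)
    | [true, true] => exact Or.inl (Blocks.two Blocks.nil)
    | true :: true :: true :: r' =>
      exact Or.inr (Or.inr (Or.inl ⟨[false], r', rfl⟩))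
    | true :: false :: r'' =>
      have hlen : r''.length ≤ n := by
        simp only [List.length_cons] at hr
        omega
      rcases ih r'' hlen with h | ⟨x, y, hxy⟩ | ⟨x, y, hxy⟩ | ⟨x, hx⟩
      · exact Or.inl (Blocks.one h)
      · refine Or.inr (Or.inl ⟨false :: true :: x, y, ?_⟩)
        simp [hxy]
      · refine Or.inr (Or.inr (Or.inl ⟨false :: true :: x, y, ?_⟩))
        simp [hxy]
      · refine Or.inr (Or.inr (Or.inr ⟨false :: true :: x, ?_⟩))
        simp [hx]
    | true :: true :: false :: r'' =>
      have hlen : r''.length ≤ n := by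
        simp only [List.length_cons] at hr
        omega
      rcases ih r'' hlen with h | ⟨x, y, hxy⟩ | ⟨x, y, hxy⟩ | ⟨x, hx⟩
      · exact Or.inl (Blocks.two h)
      · refine Or.inr (Or.inl ⟨false :: true :: true :: x, y, ?_⟩)
        simp [hxy]
      · refine Or.inr (Or.inr (Or.inl ⟨false :: true :: true :: x, y, ?_⟩))
        simp [hxy]
      · refine Or.inr (Or.inr (Or.inr ⟨false :: true :: true :: x, ?_⟩))
        simp [hx]

lemma split_word : ∀ l : List Bool,
    (∃ a, l = List.replicate a true) ∨ (∃ a m, l = List.replicate a true ++ false :: m) := by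
  intro l
  induction l with
  | nil => exact Or.inl ⟨0, rfl⟩
  | cons x l ih =>
    cases x with
    | false => exact Or.inr ⟨0, l, rfl⟩
    | true =>
      rcases ih with ⟨a, ha⟩ | ⟨a, m, ha⟩
      · exact Or.inl ⟨a + 1, by simp [ha, List.replicate_succ]⟩
      · exact Or.inr ⟨a + 1, m, by simp [ha, List.replicate_succ]⟩

/-! ### Small traces -/

lemma def_trace_one : LaurentDefinite (Matrix.trace (1 : M2)) := by
  refine def_of_NN ?_
  rw [Matrix.trace_fin_two, one_fin2]
  simpa using NN_add NN_one NN_one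

lemma def_trace_u : LaurentDefinite (Matrix.trace u) := by
  refine def_of_NN ?_
  rw [Matrix.trace_fin_two, u]
  simpa using NN_T 1

lemma def_trace_uu : LaurentDefinite (Matrix.trace (u * u)) := by
  refine def_of_NN_neg ?_
  rw [Matrix.trace_fin_two, u, Matrix.mul_fin_two]
  simp only [neg_mul, mul_neg, zero_mul, mul_zero, add_zero, zero_add, neg_neg, neg_zero,
    T1T1]
  simpa using NN_T 2

lemma def_trace_s : LaurentDefinite (Matrix.trace s) := by
  refine def_of_NN ?_
  rw [Matrix.trace_fin_two, s]
  simpa using NN_zero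

/-! ### Main induction -/

lemma main : ∀ (n : ℕ) (l : List Bool), l.length ≤ n →
    LaurentDefinite (Matrix.trace (gprod l)) := by
  intro n
  induction n using Nat.strong_induction_on with
  | _ n ih =>
    intro l hl
    rcases split_word l with ⟨a, ha⟩ | ⟨a, m, ha⟩
    · subst ha
      match a, hl with
      | 0, _ => simpa [gprod_nil] using def_trace_one
      | 1, _ => simpa [gprod_cons, gprod_nil, gm] using def_trace_u
      | 2, _ =>
        have e : gprod (List.replicate 2 true) = u * u := by
          simp [List.replicate, gprod_cons, gprod_nil, gm]
        rw [e]; exact def_trace_uu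
      | (a' + 3), hl =>
        have e : List.replicate (a' + 3) true
            = true :: true :: true :: List.replicate a' true := by
          simp [List.replicate_succ]
        have hn : 3 ≤ n := by
          rw [List.length_replicate] at hl; omega
        have hlen : (List.replicate a' true).length ≤ n - 3 := by
          rw [List.length_replicate] at hl ⊢; omega
        rw [e, red_ttt, Matrix.trace_smul, smul_eq_mul]
        exact def_negT_mul 3 (ih (n - 3) (by omega) _ hlen)
    · have key : ∀ r : List Bool, (false :: r).length ≤ n →
          LaurentDefinite (Matrix.trace (gprod (false :: r))) := by
        intro r hlenl
        rcases decomp r.length r le_rfl with h | ⟨x, y, hxy⟩ | ⟨x, y, hxy⟩ | ⟨x, hx⟩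
        · exact def_blocks h
        · rw [hxy, tred_ff]
          have hL := congrArg List.length hxy
          simp only [List.length_cons, List.length_append] at hL hlenl
          have hlen2 : (y ++ x).length ≤ n - 2 := by
            simp only [List.length_append]; omega
          have hn : 2 ≤ n := by omega
          exact def_negT_mul 3 (ih (n - 2) (by omega) _ hlen2)
        · rw [hxy, tred_ttt]
          have hL := congrArg List.length hxy
          simp only [List.length_cons, List.length_append] at hL hlenl
          have hlen2 : (y ++ x).length ≤ n - 3 := by
            simp only [List.length_append]; omega
          have hn : 3 ≤ n := by omega
          exact def_negT_mul 3 (ih (n - 3) (by omega) _ hlen2)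
        · match x, hx with
          | [], hx =>
            have hre : r = [] := by simpa using hx
            subst hre
            simpa [gprod_cons, gprod_nil, gm] using def_trace_s
          | (b :: x'), hx =>
            have hb : b = false := by
              have := congrArg (fun t => t.head?) hx
              simpa using this.symm
            subst hb
            have hr' : r = x' ++ [false] := by simpa using hx
            have e2 : Matrix.trace (gprod (false :: r)) =
                Matrix.trace (gprod (false :: false :: x')) := by
              rw [hr']
              have e1 : false :: (x' ++ [false]) = (false :: x') ++ [false] := by simp
              rw [e1, rot]
              rfl
            rw [e2, red_ff, Matrix.trace_smul, smul_eq_mul]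
            have hlen2 : x'.length ≤ n - 2 := by
              simp only [List.length_cons, hr', List.length_append] at hlenl
              omega
            have hn : 2 ≤ n := by
              simp only [List.length_cons, hr', List.length_append] at hlenl
              omega
            exact def_negT_mul 3 (ih (n - 2) (by omega) _ hlen2)
      have hrot : Matrix.trace (gprod l) =
          Matrix.trace (gprod (false :: (m ++ List.replicate a true))) := by
        rw [ha, rot]
        simp
      rw [hrot]
      apply key
      have hL := congrArg List.length ha
      simp only [List.length_cons, List.length_append, List.length_replicate] at hL ⊢
      omega

/-! ### Bridging with the Burau matrices -/

def code : BLetter → List Bool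
  | .s1 => [true, true, false]
  | .s2 => [false, true, true]
  | .s1inv => [false, true]
  | .s2inv => [true, false]

lemma letter_eq (a : BLetter) :
    burauNegLetter a = (-T (-3) : L) • gprod (code a) := by
  cases a <;>
    simp only [burauNegLetter, code, gprod_cons, gprod_nil, Matrix.mul_one, gm] <;>
    rw [s, u] <;>
    simp only [Matrix.mul_fin_two] <;>
    rw [smul_fin2] <;>
    simp only [neg_mul, mul_neg, mul_one, one_mul, zero_mul, mul_zero, add_zero, zero_add,
      neg_neg, neg_zero, T1T1, T1T2, T2T1, mul_add, add_mul, T2T2, T1T3, T3T1,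
      Tm3T2, Tm3T3, Tm3T4] <;>
    norm_num

lemma word_eq (w : List BLetter) :
    burauNegWord w = ((-T (-3) : L) ^ w.length) • gprod (w.flatMap code) := by
  induction w with
  | nil =>
    simp [burauNegWord, gprod_nil]
  | cons a w ih =>
    have : burauNegWord (a :: w) = burauNegLetter a * burauNegWord w := by
      simp [burauNegWord]
    rw [this, ih, letter_eq, smul_mul_assoc, mul_smul_comm, smul_smul,
      ← gprod_append]
    have e : (a :: w).flatMap code = code a ++ w.flatMap code := by simp
    rw [e, List.length_cons, pow_succ]
    ring_nf

lemma def_unit_pow {p : L} (k : ℕ) (h : LaurentDefinite p) :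
    LaurentDefinite ((-T (-3) : L) ^ k * p) := by
  induction k with
  | zero => simpa using h
  | succ k ih =>
    have e : (-T (-3) : L) ^ (k + 1) * p = -T (-3) * ((-T (-3) : L) ^ k * p) := by
      rw [pow_succ]; ring
    rw [e]
    exact def_negT_mul (-3) ih

end BurauAux

/-- For every element `w` of the 3-strand braid group, the trace of
`B_{-t}(w)` is a definite Laurent polynomial. -/
theorem burauNeg_trace_definite (w : List BLetter) :
    LaurentDefinite (Matrix.trace (burauNegWord w)) := by
  rw [BurauAux.word_eq, Matrix.trace_smul, smul_eq_mul]
  exact BurauAux.def_unit_pow _ (BurauAux.main _ _ le_rfl)
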